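/- Let (Ω, 𝓕, P) be a probability space with a filtration (𝓕ₙ)ₙ∈ℕ, let d ≥ 1, and let S ⊆ ℝ^d be a measurable set (the loop-guard set). Let (xₙ)ₙ∈ℕ be an (𝓕ₙ)-adapted process with values in ℝ^d with x₀ = v almost surely for a fixed v ∈ S, and let (Cₙ)ₙ∈ℕ be real-valued random variables such that Cₙ is 𝓕ₙ₊₁-measurable for each n. Let T := inf { n : xₙ ∉ S } and assume T < ∞ almost surely and E[T] < ∞. Let h : ℝ^d → ℝ be affine, i.e. h(w) = aᵀw + b for fixed a ∈ ℝ^d, b ∈ ℝ. Assume: (i) almost surely on the event {xₙ ∉ S} one has xₙ₊₁ = xₙ and Cₙ = 0; (ii) almost surely on the event {xₙ ∈ S} one has E[h(xₙ₊₁) + Cₙ | 𝓕ₙ] ≥ h(xₙ); (iii) there is a constant M ≥ 0 with |h(xₙ₊₁) − h(xₙ)| ≤ M almost surely for all n; (iv) there is a constant R_max ≥ 0 with |Cₙ| ≤ R_max almost surely for all n; (v) there is a constant K' with h(x_T) ≤ K' almost surely. Then the accumulated cost C_∞ := Σₙ₌₀^∞ Cₙ is integrable and E[C_∞] ≥ h(v)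 − K'. -/

import Mathlib

/-! The process `Yₙ = h(xₙ) + ∑_{k<n} C_k` has nondecreasing expectation: on `{xₙ ∈ S}`, an
`ℱₙ`-measurable set, this is the conditional increase of `h` integrated over that set, and off `S`
the process is frozen. Since `Y` is constant after `T` and its increments are bounded by
`M + Rmax`, it is dominated by `|h v| + (M + Rmax) T`, which is integrable. Dominated convergence
then gives `h v ≤ E[Y_T] = E[h(x_T)] + E[C_∞] ≤ K' + E[C_∞]`. -/

open MeasureTheory Filter Finset
open scoped Topology

section Sequences

variable {α β : Type*}

lemma apply_eq_of_le_of_succ_eq {u : ℕ → β} {N n : ℕ}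
    (hu : ∀ k, N ≤ k → u (k + 1) = u k) (hn : N ≤ n) : u n = u N := by
  induction n, hn using Nat.le_induction with
  | base => rfl
  | succ n hn ih => exact (hu n hn).trans ih

lemma abs_sub_le_mul_of_succ_eq {u : ℕ → ℝ} {c : ℝ} {N : ℕ}
    (hstep : ∀ n, |u (n + 1) - u n| ≤ c) (hu : ∀ n, N ≤ n → u (n + 1) = u n) (n : ℕ) :
    |u n - u 0| ≤ c * N := by
  have hc : 0 ≤ c := (abs_nonneg _).trans (hstep 0)
  have hmin : u n = u (min n N) := by
    rcases le_total n N with hnN | hNn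
    · rw [min_eq_left hnN]
    · rw [min_eq_right hNn, apply_eq_of_le_of_succ_eq hu hNn]
  calc |u n - u 0| = dist (u 0) (u (min n N)) := by rw [hmin, Real.dist_eq, abs_sub_comm]
    _ ≤ ∑ _ ∈ range (min n N), c :=
        dist_le_range_sum_of_dist_le _ fun {k} _ => by
          rw [Real.dist_eq, abs_sub_comm]; exact hstep k
    _ = c * (min n N : ℕ) := by rw [sum_const, card_range, nsmul_eq_mul, mul_comm]
    _ ≤ c * N := by gcongr; exact min_le_right n N

lemma notMem_of_sInf_le {S : Set α} {y : ℕ → α} (hy : ∀ n, y n ∉ S → y (n + 1) = y n)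
    (hexit : ∃ n, y n ∉ S) {n : ℕ} (hn : sInf {k | y k ∉ S} ≤ n) : y n ∉ S := by
  induction n, hn using Nat.le_induction with
  | base => exact Nat.sInf_mem hexit
  | succ n _ ih => rwa [hy n ih]

end Sequences

section Expectation

variable {Ω : Type*} {m m0 : MeasurableSpace Ω} {μ : Measure Ω}

lemma integral_le_of_le_condExp_of_eq_on_compl (hm : m ≤ m0) [SigmaFinite (μ.trim hm)]
    {A : Set Ω} (hA : MeasurableSet[m] A) {f Z : Ω → ℝ} (hf : Integrable f μ)
    (hZ : Integrable Z μ) (hle : ∀ᵐ ω ∂μ, ω ∈ A → f ω ≤ μ[Z | m] ω)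
    (heq : ∀ᵐ ω ∂μ, ω ∉ A → f ω = Z ω) : ∫ ω, f ω ∂μ ≤ ∫ ω, Z ω ∂μ := by
  have hA0 : MeasurableSet A := hm A hA
  have hon : ∫ ω in A, f ω ∂μ ≤ ∫ ω in A, Z ω ∂μ := by
    rw [← setIntegral_condExp hm hZ hA]
    exact setIntegral_mono_ae_restrict hf.integrableOn integrable_condExp.integrableOn
      ((ae_restrict_iff' hA0).2 hle)
  have hoff : ∫ ω in Aᶜ, f ω ∂μ = ∫ ω in Aᶜ, Z ω ∂μ := setIntegral_congr_ae hA0.compl heq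
  rw [← integral_add_compl hA0 hf, ← integral_add_compl hA0 hZ, hoff]
  exact add_le_add_left hon _

lemma integral_le_integral_add_sum_range {Φ c : ℕ → Ω → ℝ} (hΦ : ∀ n, Integrable (Φ n) μ)
    (hc : ∀ n, Integrable (c n) μ)
    (hstep : ∀ n, ∫ ω, Φ n ω ∂μ ≤ ∫ ω, (Φ (n + 1) ω + c n ω) ∂μ) (n : ℕ) :
    ∫ ω, Φ 0 ω ∂μ ≤ ∫ ω, (Φ n ω + ∑ k ∈ range n, c k ω) ∂μ := by
  induction n with
  | zero => simp
  | succ n ih =>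
    have hsum : ∀ k, Integrable (fun ω => ∑ i ∈ range k, c i ω) μ :=
      fun k => integrable_finsetSum _ fun i _ => hc i
    calc ∫ ω, Φ 0 ω ∂μ ≤ ∫ ω, Φ n ω ∂μ + ∫ ω, ∑ k ∈ range n, c k ω ∂μ := by
          rwa [← integral_add (hΦ n) (hsum n)]
      _ ≤ ∫ ω, (Φ (n + 1) ω + c n ω) ∂μ + ∫ ω, ∑ k ∈ range n, c k ω ∂μ := by
          linarith [hstep n]
      _ = ∫ ω, (Φ (n + 1) ω + ∑ k ∈ range (n + 1), c k ω) ∂μ := by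
          rw [← integral_add (f := fun ω => Φ (n + 1) ω + c n ω) ((hΦ (n + 1)).add (hc n))
            (hsum n)]
          simp only [sum_range_succ, add_assoc, add_comm (c n _)]

lemma integrable_of_abs_succ_sub_le [IsFiniteMeasure μ] {u : ℕ → Ω → ℝ} {c : ℝ}
    (hu : ∀ n, AEStronglyMeasurable (u n) μ) (h0 : Integrable (u 0) μ)
    (hstep : ∀ n, ∀ᵐ ω ∂μ, |u (n + 1) ω - u n ω| ≤ c) (n : ℕ) : Integrable (u n) μ := by
  induction n with
  | zero => exact h0
  | succ n ih =>
    have hdiff : Integrable (fun ω => u (n + 1) ω - u n ω) μ :=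
      .of_bound ((hu (n + 1)).sub (hu n)) c (by simpa only [Real.norm_eq_abs] using hstep n)
    exact (hdiff.add ih).congr (.of_forall fun ω => by simp)

lemma integrable_stopped_and_tendsto_integral {Y : ℕ → Ω → ℝ} {T : Ω → ℕ} {c : ℝ}
    (hY : ∀ n, AEStronglyMeasurable (Y n) μ) (hY0 : Integrable (Y 0) μ)
    (hT : Integrable (fun ω => (T ω : ℝ)) μ)
    (hstep : ∀ᵐ ω ∂μ, ∀ n, |Y (n + 1) ω - Y n ω| ≤ c)
    (hfrozen : ∀ᵐ ω ∂μ, ∀ n, T ω ≤ n → Y (n + 1) ω = Y n ω) :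
    Integrable (fun ω => Y (T ω) ω) μ ∧
      Tendsto (fun n => ∫ ω, Y n ω ∂μ) atTop (𝓝 (∫ ω, Y (T ω) ω ∂μ)) := by
  have hF : Integrable (fun ω => |Y 0 ω| + c * T ω) μ := hY0.abs.add (hT.const_mul c)
  have hbound : ∀ᵐ ω ∂μ, ∀ n, ‖Y n ω‖ ≤ |Y 0 ω| + c * T ω := by
    filter_upwards [hstep, hfrozen] with ω hs hf n
    have := abs_sub_le_mul_of_succ_eq (u := (Y · ω)) hs hf n
    rw [Real.norm_eq_abs]
    linarith [abs_sub_abs_le_abs_sub (Y n ω) (Y 0 ω)]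
  have hlim : ∀ᵐ ω ∂μ, Tendsto (fun n => Y n ω) atTop (𝓝 (Y (T ω) ω)) := by
    filter_upwards [hfrozen] with ω hf
    exact tendsto_atTop_of_eventually_const fun n hn =>
      apply_eq_of_le_of_succ_eq (u := (Y · ω)) hf hn
  refine ⟨hF.mono' (aestronglyMeasurable_of_tendsto_ae atTop hY hlim) ?_,
    tendsto_integral_of_dominated_convergence _ hY hF (fun n => ?_) hlim⟩
  · filter_upwards [hbound] with ω hb using hb (T ω)
  · filter_upwards [hbound] with ω hb using hb n

lemma integrable_and_tendsto_integral_add_sum_range {g c : ℕ → Ω → ℝ} {T : Ω → ℕ} {M R : ℝ}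
    (hg : ∀ n, AEStronglyMeasurable (g n) μ) (hc : ∀ n, AEStronglyMeasurable (c n) μ)
    (hg0 : Integrable (g 0) μ) (hT : Integrable (fun ω => (T ω : ℝ)) μ)
    (hgstep : ∀ n, ∀ᵐ ω ∂μ, |g (n + 1) ω - g n ω| ≤ M) (hcbd : ∀ n, ∀ᵐ ω ∂μ, |c n ω| ≤ R)
    (hstop : ∀ᵐ ω ∂μ, ∀ n, T ω ≤ n → g (n + 1) ω = g n ω ∧ c n ω = 0) :
    Integrable (fun ω => ∑' n, c n ω) μ ∧ Integrable (fun ω => g (T ω) ω) μ ∧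
      Tendsto (fun n => ∫ ω, (g n ω + ∑ k ∈ range n, c k ω) ∂μ) atTop
        (𝓝 (∫ ω, g (T ω) ω ∂μ + ∫ ω, ∑' n, c n ω ∂μ)) := by
  set D : ℕ → Ω → ℝ := fun n ω => ∑ k ∈ range n, c k ω
  set Y : ℕ → Ω → ℝ := fun n ω => g n ω + D n ω
  have hD (n : ℕ) : AEStronglyMeasurable (D n) μ :=
    Finset.aestronglyMeasurable_fun_sum _ fun k _ => hc k
  obtain ⟨hDT, -⟩ := integrable_stopped_and_tendsto_integral (Y := D) (c := R) hD (by simp [D]) hT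
    (by filter_upwards [ae_all_iff.2 hcbd] with ω hω n; simpa [D, sum_range_succ] using hω n)
    (by filter_upwards [hstop] with ω hω n hn; simp [D, sum_range_succ, (hω n hn).2])
  obtain ⟨hYT, hYlim⟩ := integrable_stopped_and_tendsto_integral (Y := Y) (c := M + R)
    (fun n => (hg n).add (hD n)) (by simpa [Y, D] using hg0) hT
    (by
      filter_upwards [ae_all_iff.2 hgstep, ae_all_iff.2 hcbd] with ω hgω hcω n
      have hinc : Y (n + 1) ω - Y n ω = (g (n + 1) ω - g n ω) + c n ω := by
        simp only [Y, D, sum_range_succ]; ring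
      exact hinc ▸ (abs_add_le _ _).trans (add_le_add (hgω n) (hcω n)))
    (by filter_upwards [hstop] with ω hω n hn; simp [Y, D, sum_range_succ, hω n hn])
  have htsum : (fun ω => D (T ω) ω) =ᵐ[μ] fun ω => ∑' n, c n ω := by
    filter_upwards [hstop] with ω hω
    exact (tsum_eq_sum fun n hn => (hω n (by simpa using hn)).2).symm
  have hgT : Integrable (fun ω => g (T ω) ω) μ :=
    (hYT.sub hDT).congr (.of_forall fun ω => by simp [Y])
  refine ⟨hDT.congr htsum, hgT, ?_⟩
  rwa [← integral_congr_ae htsum, ← integral_add hgT hDT]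

end Expectation

theorem llpf_lower_bound_general
    {Ω : Type*} {m0 : MeasurableSpace Ω} (P : Measure Ω) [IsProbabilityMeasure P]
    (ℱ : Filtration ℕ m0)
    (d : ℕ)
    (S : Set (Fin d → ℝ)) (hS : MeasurableSet S)
    (x : ℕ → Ω → (Fin d → ℝ)) (hx : Adapted ℱ x)
    (v : Fin d → ℝ) (hx0 : ∀ᵐ ω ∂P, x 0 ω = v)
    (C : ℕ → Ω → ℝ) (hCmeas : ∀ n, StronglyMeasurable[ℱ (n + 1)] (C n))
    (T : Ω → ℕ) (hT : ∀ ω, T ω = sInf {n | x n ω ∉ S})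
    (hTfin : ∀ᵐ ω ∂P, ∃ n, x n ω ∉ S)
    (hTint : Integrable (fun ω => (T ω : ℝ)) P)
    (h : (Fin d → ℝ) → ℝ) (a : Fin d → ℝ) (b : ℝ)
    (haff : ∀ w, h w = (∑ i, a i * w i) + b)
    (hfreeze : ∀ n, ∀ᵐ ω ∂P, x n ω ∉ S → x (n + 1) ω = x n ω ∧ C n ω = 0)
    (hincr : ∀ n, ∀ᵐ ω ∂P, x n ω ∈ S →
      h (x n ω) ≤ (P[fun ω' => h (x (n + 1) ω') + C n ω' | ℱ n]) ω)
    (M : ℝ)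
    (hbd : ∀ n, ∀ᵐ ω ∂P, |h (x (n + 1) ω) - h (x n ω)| ≤ M)
    (Rmax : ℝ)
    (hCbd : ∀ n, ∀ᵐ ω ∂P, |C n ω| ≤ Rmax)
    (K' : ℝ) (hK' : ∀ᵐ ω ∂P, h (x (T ω) ω) ≤ K') :
    Integrable (fun ω => ∑' n, C n ω) P ∧
      h v - K' ≤ ∫ ω, (∑' n, C n ω) ∂P := by
  have hcont : Continuous h := (funext haff : h = _) ▸ by fun_prop
  have hgm (n : ℕ) : StronglyMeasurable fun ω => h (x n ω) :=
    (hcont.measurable.comp ((hx n).mono (ℱ.le n) le_rfl)).stronglyMeasurable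
  have hCm (n : ℕ) : StronglyMeasurable (C n) := (hCmeas n).mono (ℱ.le _)
  have hg0 : (fun ω => h (x 0 ω)) =ᵐ[P] fun _ => h v := hx0.mono fun ω hω => congrArg h hω
  have hgint := integrable_of_abs_succ_sub_le (fun n => (hgm n).aestronglyMeasurable)
    ((integrable_const (h v)).congr hg0.symm) hbd
  have hCint (n : ℕ) : Integrable (C n) P :=
    .of_bound (hCm n).aestronglyMeasurable Rmax (by simpa only [Real.norm_eq_abs] using hCbd n)
  have hY_ge (n : ℕ) : h v ≤ ∫ ω, (h (x n ω) + ∑ k ∈ range n, C k ω) ∂P :=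
    calc h v = ∫ ω, h (x 0 ω) ∂P := by simp [integral_congr_ae hg0]
      _ ≤ _ := integral_le_integral_add_sum_range hgint hCint (fun n =>
          integral_le_of_le_condExp_of_eq_on_compl (ℱ.le n) (hx n hS) (hgint n)
            ((hgint (n + 1)).add (hCint n)) (hincr n)
            (by filter_upwards [hfreeze n] with ω hω hω'; simp [(hω hω').1, (hω hω').2])) n
  have hstop : ∀ᵐ ω ∂P, ∀ n, T ω ≤ n → x (n + 1) ω = x n ω ∧ C n ω = 0 := by
    filter_upwards [hTfin, ae_all_iff.2 hfreeze] with ω hexit hfr n hn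
    exact hfr n (notMem_of_sInf_le (fun k hk => (hfr k hk).1) hexit (hT ω ▸ hn))
  obtain ⟨hCsum, hgT, hlim⟩ := integrable_and_tendsto_integral_add_sum_range
    (fun n => (hgm n).aestronglyMeasurable) (fun n => (hCm n).aestronglyMeasurable) (hgint 0)
    hTint hbd hCbd (hstop.mono fun ω hω n hn => ⟨congrArg h (hω n hn).1, (hω n hn).2⟩)
  have hK : ∫ ω, h (x (T ω) ω) ∂P ≤ K' :=
    (integral_mono_ae hgT (integrable_const K') hK').trans_eq (by simp)
  exact ⟨hCsum, by linarith [ge_of_tendsto' hlim hY_ge]⟩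

/-- **Lower bounds via Linear Lower Potential Functions (LLPFs).**
If `h` is an affine potential function that conditionally increases (plus the step cost)
inside the loop-guard set `S`, has bounded differences along the process, and is bounded
above by `K'` at the termination time `T` (which has finite expectation), then the
accumulated cost `C_∞ = ∑ₙ Cₙ` is integrable and `E[C_∞] ≥ h(v) − K'`. -/
theorem llpf_lower_bound
    {Ω : Type*} {m0 : MeasurableSpace Ω} (P : Measure Ω) [IsProbabilityMeasure P]
    (ℱ : Filtration ℕ m0)
    (d : ℕ) (hd : 1 ≤ d)
    (S : Set (Fin d → ℝ)) (hS : MeasurableSet S)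
    (x : ℕ → Ω → (Fin d → ℝ)) (hx : Adapted ℱ x)
    (v : Fin d → ℝ) (hv : v ∈ S) (hx0 : ∀ᵐ ω ∂P, x 0 ω = v)
    (C : ℕ → Ω → ℝ) (hCmeas : ∀ n, StronglyMeasurable[ℱ (n + 1)] (C n))
    (T : Ω → ℕ) (hT : ∀ ω, T ω = sInf {n | x n ω ∉ S})
    (hTfin : ∀ᵐ ω ∂P, ∃ n, x n ω ∉ S)
    (hTint : Integrable (fun ω => (T ω : ℝ)) P)
    (h : (Fin d → ℝ) → ℝ) (a : Fin d → ℝ) (b : ℝ)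
    (haff : ∀ w, h w = (∑ i, a i * w i) + b)
    (hfreeze : ∀ n, ∀ᵐ ω ∂P, x n ω ∉ S → x (n + 1) ω = x n ω ∧ C n ω = 0)
    (hincr : ∀ n, ∀ᵐ ω ∂P, x n ω ∈ S →
      h (x n ω) ≤ (P[fun ω' => h (x (n + 1) ω') + C n ω' | ℱ n]) ω)
    (M : ℝ) (hM : 0 ≤ M)
    (hbd : ∀ n, ∀ᵐ ω ∂P, |h (x (n + 1) ω) - h (x n ω)| ≤ M)
    (Rmax : ℝ) (hR : 0 ≤ Rmax)
    (hCbd : ∀ n, ∀ᵐ ω ∂P, |C n ω| ≤ Rmax)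
    (K' : ℝ) (hK' : ∀ᵐ ω ∂P, h (x (T ω) ω) ≤ K') :
    Integrable (fun ω => ∑' n, C n ω) P ∧
      h v - K' ≤ ∫ ω, (∑' n, C n ω) ∂P :=
  llpf_lower_bound_general P ℱ d S hS x hx v hx0 C hCmeas T hT hTfin hTint h a b haff hfreeze hincr
    M hbd Rmax hCbd K' hK'
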